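/- For every set a, the map i_a defined recursively by i_a(∅) = a and i_a(x) = { i_a(y) : y ∈ x } is injective on the class of all sets. -/
import Mathlib

theorem rank_a_lt (a : ZFSet) (i : ZFSet → ZFSet)
    (h0 : i ∅ = a)
    (hrec : ∀ x : ZFSet, x ≠ ∅ → ∀ w : ZFSet, w ∈ i x ↔ ∃ y ∈ x, w = i y) :
    ∀ x : ZFSet, x ≠ ∅ → a.rank < (i x).rank := by
  intro x
  induction x using ZFSet.inductionOn with
  | _ x IH =>
    intro hx
    obtain rfl | ⟨y, hy⟩ := ZFSet.eq_empty_or_nonempty x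
    · exact absurd rfl hx
    have hiy : i y ∈ i x := (hrec x hx (i y)).2 ⟨y, hy, rfl⟩
    rcases eq_or_ne y ∅ with rfl | hy0
    · rw [h0] at hiy; exact ZFSet.rank_lt_of_mem hiy
    · exact (IH y hy hy0).trans (ZFSet.rank_lt_of_mem hiy)

/-- For any set `a`, any map `i` satisfying the recursion `i ∅ = a` and
`i x = { i y : y ∈ x }` for nonempty `x` is injective on the class of all sets. -/
theorem i_a_injective (a : ZFSet) (i : ZFSet → ZFSet)
    (h0 : i ∅ = a)
    (hrec : ∀ x : ZFSet, x ≠ ∅ → ∀ w : ZFSet, w ∈ i x ↔ ∃ y ∈ x, w = i y) :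
    Function.Injective i := by
  intro x
  induction x using ZFSet.inductionOn with
  | _ x IH =>
    intro y hxy
    rcases eq_or_ne x ∅ with rfl | hx
    · rcases eq_or_ne y ∅ with rfl | hy
      · rfl
      · exfalso
        have := rank_a_lt a i h0 hrec y hy
        rw [← hxy, h0] at this
        exact lt_irrefl _ this
    · rcases eq_or_ne y ∅ with rfl | hy
      · exfalso
        have := rank_a_lt a i h0 hrec x hx
        rw [hxy, h0] at this
        exact lt_irrefl _ this
      · apply ZFSet.ext
        intro z
        constructor
        · intro hz
          have : i z ∈ i y := by rw [← hxy]; exact (hrec x hx (i z)).2 ⟨z, hz, rfl⟩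
          obtain ⟨w, hw, hzw⟩ := (hrec y hy (i z)).1 this
          rwa [IH z hz hzw]
        · intro hz
          have : i z ∈ i x := by rw [hxy]; exact (hrec y hy (i z)).2 ⟨z, hz, rfl⟩
          obtain ⟨w, hw, hzw⟩ := (hrec x hx (i z)).1 this
          rwa [← IH w hw hzw.symm]
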